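/- Let D and T be random variables on a common probability space taking values in finite sets, with p(T=t)>0 for every t in the range of T. Let x* be a fixed value with p(D=x*)>0, and suppose p(T=t | D=x*) > 0 whenever p(T=t) > 0. Then E_{(D,T)}[ log( p(T | D) / p(T) ) ] − E_{T}[ log( p(T | D=x*) / p(T) ) ] = E_{D}[ KL( p(T=· | D) ‖ p(T=· | D=x*) ) ] ≥ 0, where the first expectation is over the joint law of (D,T), the second over the marginal law of T, and the third over the marginal law of D. In other words, the expected PMI score of truthful reporting is at least the expected PMI score of the strategic curation method that always reports the fixed dataset x*. -/

import Mathlib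

/-!
Write `J(d,t)` for the joint law of `(D,T)`, `P(t)` for the law of `T` and `C_d(t)` for the
conditional law of `T` given `D = d`. Since `P` is the `t`-marginal of `J`, the score of always
reporting `x*` equals `∑ J(d,t) log (C_{x*}(t) / P(t))`, so the difference of the two scores is
`∑ J(d,t) log (C_d(t) / C_{x*}(t))`; by the chain rule `J(d,t) = P(D = d) C_d(t)` this is the
average of the divergences `KL(C_d ‖ C_{x*})`, each nonnegative by Gibbs' inequality.
-/

open Finset
open scoped Classical

/-- Probability of an event under a pmf on a finite sample space. -/
noncomputable def pr {Ω : Type*} [Fintype Ω] (p : Ω → ℝ) (E : Ω → Prop) : ℝ :=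
  ∑ ω, if E ω then p ω else 0

/-- Conditional probability `p(E | F)`. -/
noncomputable def cpr {Ω : Type*} [Fintype Ω] (p : Ω → ℝ) (E F : Ω → Prop) : ℝ :=
  pr p (fun ω => E ω ∧ F ω) / pr p F

/-- KL divergence between two pmfs on a finite set. -/
noncomputable def klD {A : Type*} [Fintype A] (q r : A → ℝ) : ℝ :=
  ∑ w, if 0 < q w then q w * Real.log (q w / r w) else 0

section Gibbs

variable {A : Type*} [Fintype A] {q r : A → ℝ}

lemma klD_eq_sum (hq : ∀ w, 0 ≤ q w) : klD q r = ∑ w, q w * Real.log (q w / r w) := by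
  refine sum_congr rfl fun w _ => ?_
  rcases (hq w).lt_or_eq with hw | hw
  · rw [if_pos hw]
  · simp [← hw]

lemma sub_le_mul_log_div {a b : ℝ} (ha : 0 ≤ a) (hb : 0 ≤ b) (hab : 0 < a → 0 < b) :
    a - b ≤ a * Real.log (a / b) := by
  rcases ha.lt_or_eq with ha | rfl
  · have hb := hab ha
    have := Real.one_sub_inv_le_log_of_pos (div_pos ha hb)
    rw [inv_div] at this
    calc a - b = a * (1 - b / a) := by field_simp
      _ ≤ a * Real.log (a / b) := mul_le_mul_of_nonneg_left this ha.le
  · simpa using hb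

lemma klD_nonneg (hq : ∀ w, 0 ≤ q w) (hr : ∀ w, 0 ≤ r w) (hsum : ∑ w, r w ≤ ∑ w, q w)
    (hqr : ∀ w, 0 < q w → 0 < r w) : 0 ≤ klD q r := by
  rw [klD_eq_sum hq]
  calc (0 : ℝ) ≤ ∑ w, (q w - r w) := by rw [sum_sub_distrib]; linarith
    _ ≤ _ := sum_le_sum fun w _ => sub_le_mul_log_div (hq w) (hr w) (hqr w)

end Gibbs

section Probability

variable {Ω B : Type*} [Fintype Ω] [Fintype B] {p : Ω → ℝ}

lemma pr_nonneg (hp : ∀ ω, 0 ≤ p ω) (E : Ω → Prop) : 0 ≤ pr p E :=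
  sum_nonneg fun ω _ => by split_ifs <;> simp [hp ω]

lemma pr_mono (hp : ∀ ω, 0 ≤ p ω) {E F : Ω → Prop} (h : ∀ ω, E ω → F ω) : pr p E ≤ pr p F :=
  sum_le_sum fun ω _ => by
    split_ifs with hE hF
    exacts [le_rfl, absurd (h ω hE) hF, hp ω, le_rfl]

lemma sum_pr_eq_and (f : Ω → B) (E : Ω → Prop) :
    ∑ b, pr p (fun ω => f ω = b ∧ E ω) = pr p E := by
  unfold pr
  rw [sum_comm]
  refine sum_congr rfl fun ω _ => ?_
  by_cases h : E ω <;> simp [h]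

lemma cpr_nonneg (hp : ∀ ω, 0 ≤ p ω) (E F : Ω → Prop) : 0 ≤ cpr p E F :=
  div_nonneg (pr_nonneg hp _) (pr_nonneg hp _)

lemma pr_mul_cpr (hp : ∀ ω, 0 ≤ p ω) (E F : Ω → Prop) :
    pr p F * cpr p E F = pr p (fun ω => F ω ∧ E ω) := by
  have hcomm : pr p (fun ω => E ω ∧ F ω) = pr p (fun ω => F ω ∧ E ω) := by
    simp only [and_comm]
  by_cases hF : pr p F = 0
  · have : pr p (fun ω => F ω ∧ E ω) ≤ 0 := hF ▸ pr_mono hp fun _ h => h.1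
    rw [hF, zero_mul]
    exact (this.antisymm (pr_nonneg hp _)).symm
  · rw [cpr, mul_div_cancel₀ _ hF, hcomm]

lemma sum_cpr_eq_div_self (f : Ω → B) (F : Ω → Prop) :
    ∑ b, cpr p (fun ω => f ω = b) F = pr p F / pr p F := by
  simp only [cpr, ← sum_div, sum_pr_eq_and]

end Probability

section Scores

variable {Ω A B : Type*} [Fintype Ω] [Fintype A] [Fintype B] {p : Ω → ℝ}

lemma sum_pr_mul_klD_cpr (hp : ∀ ω, 0 ≤ p ω) (Dv : Ω → A) (Tv : Ω → B) (r : B → ℝ) :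
    ∑ d, pr p (fun ω => Dv ω = d) * klD (fun t => cpr p (fun ω => Tv ω = t) (fun ω => Dv ω = d)) r =
      ∑ d, ∑ t, pr p (fun ω => Dv ω = d ∧ Tv ω = t) *
        Real.log (cpr p (fun ω => Tv ω = t) (fun ω => Dv ω = d) / r t) := by
  refine sum_congr rfl fun d _ => ?_
  rw [klD_eq_sum fun t => cpr_nonneg hp _ _, mul_sum]
  refine sum_congr rfl fun t _ => ?_
  rw [← mul_assoc, pr_mul_cpr hp]

lemma pmi_score_sub_eq (hp : ∀ ω, 0 ≤ p ω) (Dv : Ω → A) (Tv : Ω → B) {r : B → ℝ}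
    (hr : ∀ t, 0 < pr p (fun ω => Tv ω = t) → 0 < r t) :
    (∑ d, ∑ t, pr p (fun ω => Dv ω = d ∧ Tv ω = t) *
        Real.log (cpr p (fun ω => Tv ω = t) (fun ω => Dv ω = d) / pr p (fun ω => Tv ω = t))) -
      ∑ t, pr p (fun ω => Tv ω = t) * Real.log (r t / pr p (fun ω => Tv ω = t)) =
      ∑ d, ∑ t, pr p (fun ω => Dv ω = d ∧ Tv ω = t) *
        Real.log (cpr p (fun ω => Tv ω = t) (fun ω => Dv ω = d) / r t) := by
  have hmarg : ∑ t, pr p (fun ω => Tv ω = t) * Real.log (r t / pr p (fun ω => Tv ω = t)) =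
      ∑ d, ∑ t, pr p (fun ω => Dv ω = d ∧ Tv ω = t) *
        Real.log (r t / pr p (fun ω => Tv ω = t)) := by
    rw [sum_comm]
    exact sum_congr rfl fun t _ => by rw [← sum_mul, sum_pr_eq_and]
  rw [hmarg, ← sum_sub_distrib]
  refine sum_congr rfl fun d _ => ?_
  rw [← sum_sub_distrib]
  refine sum_congr rfl fun t _ => ?_
  rcases (pr_nonneg hp fun ω => Dv ω = d ∧ Tv ω = t).lt_or_eq with hJ | hJ
  · have hC : 0 < cpr p (fun ω => Tv ω = t) (fun ω => Dv ω = d) :=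
      pos_of_mul_pos_right (pr_mul_cpr hp _ _ ▸ hJ) (pr_nonneg hp _)
    have hP : 0 < pr p (fun ω => Tv ω = t) := hJ.trans_le (pr_mono hp fun _ h => h.2)
    rw [← mul_sub, Real.log_div hC.ne' hP.ne', Real.log_div (hr t hP).ne' hP.ne',
      Real.log_div hC.ne' (hr t hP).ne']
    ring
  · simp [← hJ]

lemma sum_pr_mul_klD_cpr_nonneg (hp : ∀ ω, 0 ≤ p ω) (Dv : Ω → A) (Tv : Ω → B) {r : B → ℝ}
    (hr₀ : ∀ t, 0 ≤ r t) (hr₁ : ∑ t, r t ≤ 1)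
    (hr : ∀ t, 0 < pr p (fun ω => Tv ω = t) → 0 < r t) :
    0 ≤ ∑ d, pr p (fun ω => Dv ω = d) *
      klD (fun t => cpr p (fun ω => Tv ω = t) (fun ω => Dv ω = d)) r := by
  refine sum_nonneg fun d _ => ?_
  rcases (pr_nonneg hp fun ω => Dv ω = d).lt_or_eq with hd | hd
  · refine mul_nonneg hd.le (klD_nonneg (fun t => cpr_nonneg hp _ _) hr₀ ?_ fun t ht => hr t ?_)
    · rw [sum_cpr_eq_div_self, div_self hd.ne']
      exact hr₁
    · have hJ := pr_mul_cpr hp (fun ω => Tv ω = t) (fun ω => Dv ω = d) ▸ mul_pos hd ht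
      exact hJ.trans_le (pr_mono hp fun _ h => h.2)
  · rw [← hd, zero_mul]

end Scores

theorem stmt14_general {Ω A B : Type*} [Fintype Ω] [Fintype A] [Fintype B]
    (p : Ω → ℝ) (hp : ∀ ω, 0 ≤ p ω)
    (Dv : Ω → A) (Tv : Ω → B)
    (xstar : A)
    (habs : ∀ t, 0 < pr p (fun ω => Tv ω = t) →
      0 < cpr p (fun ω => Tv ω = t) (fun ω => Dv ω = xstar)) :
    -- expected PMI score of truthful reporting minus that of always reporting x*
    ((∑ d, ∑ t, pr p (fun ω => Dv ω = d ∧ Tv ω = t) *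
        Real.log (cpr p (fun ω => Tv ω = t) (fun ω => Dv ω = d) /
          pr p (fun ω => Tv ω = t))) -
      (∑ t, pr p (fun ω => Tv ω = t) *
        Real.log (cpr p (fun ω => Tv ω = t) (fun ω => Dv ω = xstar) /
          pr p (fun ω => Tv ω = t))) =
      ∑ d, pr p (fun ω => Dv ω = d) *
        klD (fun t => cpr p (fun ω => Tv ω = t) (fun ω => Dv ω = d))
          (fun t => cpr p (fun ω => Tv ω = t) (fun ω => Dv ω = xstar))) ∧
    0 ≤ ∑ d, pr p (fun ω => Dv ω = d) *
        klD (fun t => cpr p (fun ω => Tv ω = t) (fun ω => Dv ω = d))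
          (fun t => cpr p (fun ω => Tv ω = t) (fun ω => Dv ω = xstar)) := by
  have hsum : ∑ t, cpr p (fun ω => Tv ω = t) (fun ω => Dv ω = xstar) ≤ 1 :=
    (sum_cpr_eq_div_self Tv _).trans_le (div_self_le_one _)
  exact ⟨(pmi_score_sub_eq hp Dv Tv habs).trans (sum_pr_mul_klD_cpr hp Dv Tv _).symm,
    sum_pr_mul_klD_cpr_nonneg hp Dv Tv (fun t => cpr_nonneg hp _ _) hsum habs⟩

theorem stmt14 {Ω A B : Type*} [Fintype Ω] [Fintype A] [Fintype B]
    (p : Ω → ℝ) (hp : ∀ ω, 0 ≤ p ω) (hps : ∑ ω, p ω = 1)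
    (Dv : Ω → A) (Tv : Ω → B)
    (hT : ∀ t, 0 < pr p (fun ω => Tv ω = t))
    (xstar : A) (hx : 0 < pr p (fun ω => Dv ω = xstar))
    (habs : ∀ t, 0 < pr p (fun ω => Tv ω = t) →
      0 < cpr p (fun ω => Tv ω = t) (fun ω => Dv ω = xstar)) :
    -- expected PMI score of truthful reporting minus that of always reporting x*
    ((∑ d, ∑ t, pr p (fun ω => Dv ω = d ∧ Tv ω = t) *
        Real.log (cpr p (fun ω => Tv ω = t) (fun ω => Dv ω = d) /
          pr p (fun ω => Tv ω = t))) -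
      (∑ t, pr p (fun ω => Tv ω = t) *
        Real.log (cpr p (fun ω => Tv ω = t) (fun ω => Dv ω = xstar) /
          pr p (fun ω => Tv ω = t))) =
      ∑ d, pr p (fun ω => Dv ω = d) *
        klD (fun t => cpr p (fun ω => Tv ω = t) (fun ω => Dv ω = d))
          (fun t => cpr p (fun ω => Tv ω = t) (fun ω => Dv ω = xstar))) ∧
    0 ≤ ∑ d, pr p (fun ω => Dv ω = d) *
        klD (fun t => cpr p (fun ω => Tv ω = t) (fun ω => Dv ω = d))
          (fun t => cpr p (fun ω => Tv ω = t) (fun ω => Dv ω = xstar)) :=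
  stmt14_general p hp Dv Tv xstar habs
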